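/- If C has binary coproducts, D has binary products, and G : C → D has a left adjoint, then the forgetful functor from the scone D ↓ G to D × C is both comonadic and monadic. -/

import Mathlib

/-!
Both halves are Beck's theorem applied to `U = (fst, snd) : Comma L R ⥤ A × B`, which satisfies
its hypotheses for every comma category. `U` reflects isomorphisms, and if `(f, g)` is a
`U`-(co)split pair then both components are split (co)equalizers. These are absolute, so `R`
(resp. `L`) preserves them, the comma category has the (co)equalizer of `(f, g)` computed
componentwise, and `U` preserves it. For the scone `D ↓ G` the two adjoints of `U` are explicit:
`(d, c)` goes to `prod.snd : d ⨯ G c ⟶ G c` on the right, and to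
`η ≫ G inl : d ⟶ G (F d ⨿ c)` on the left, where `η` is the unit of `F ⊣ G`.
-/

universe v₁ v₂ u₁ u₂

open CategoryTheory CategoryTheory.Limits

namespace CategoryTheory.Limits

variable {A B J : Type*} [Category A] [Category B] [Category J] {K : J ⥤ A × B}

def isLimitOfIsLimitMapConeFstSnd (c : Cone K)
    (h₁ : IsLimit ((Prod.fst A B).mapCone c)) (h₂ : IsLimit ((Prod.snd A B).mapCone c)) :
    IsLimit c where
  lift s := (h₁.lift ((Prod.fst A B).mapCone s), h₂.lift ((Prod.snd A B).mapCone s))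
  fac _ j := Prod.ext (h₁.fac _ j) (h₂.fac _ j)
  uniq s m w := Prod.ext (h₁.uniq ((Prod.fst A B).mapCone s) m.1 fun j => congrArg (·.1) (w j))
    (h₂.uniq ((Prod.snd A B).mapCone s) m.2 fun j => congrArg (·.2) (w j))

def isColimitOfIsColimitMapCoconeFstSnd (c : Cocone K)
    (h₁ : IsColimit ((Prod.fst A B).mapCocone c)) (h₂ : IsColimit ((Prod.snd A B).mapCocone c)) :
    IsColimit c where
  desc s := (h₁.desc ((Prod.fst A B).mapCocone s), h₂.desc ((Prod.snd A B).mapCocone s))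
  fac _ j := Prod.ext (h₁.fac _ j) (h₂.fac _ j)
  uniq s m w := Prod.ext
    (h₁.uniq ((Prod.fst A B).mapCocone s) m.1 fun j => congrArg (·.1) (w j))
    (h₂.uniq ((Prod.snd A B).mapCocone s) m.2 fun j => congrArg (·.2) (w j))

end CategoryTheory.Limits

namespace CategoryTheory.Functor

variable {C D E : Type*} [Category C] [Category D] [Category E] (F : C ⥤ D) {X Y : C}
  (f g : X ⟶ Y)

instance hasLimit_parallelPair_comp_of_isCosplitPair [F.IsCosplitPair f g] :
    HasLimit (parallelPair f g ⋙ F) :=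
  (hasLimit_iff_of_iso (diagramIsoParallelPair _)).mpr
    (inferInstanceAs (HasEqualizer (F.map f) (F.map g)))

instance preservesLimit_parallelPair_comp_of_isCosplitPair [F.IsCosplitPair f g] (H : D ⥤ E) :
    PreservesLimit (parallelPair f g ⋙ F) H :=
  preservesLimit_of_iso_diagram (K₁ := parallelPair (F.map f) (F.map g)) H
    (diagramIsoParallelPair (parallelPair f g ⋙ F)).symm

instance hasColimit_parallelPair_comp_of_isSplitPair [F.IsSplitPair f g] :
    HasColimit (parallelPair f g ⋙ F) :=
  (hasColimit_iff_of_iso (diagramIsoParallelPair _)).mpr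
    (inferInstanceAs (HasCoequalizer (F.map f) (F.map g)))

instance preservesColimit_parallelPair_comp_of_isSplitPair [F.IsSplitPair f g] (H : D ⥤ E) :
    PreservesColimit (parallelPair f g ⋙ F) H :=
  preservesColimit_of_iso_diagram (K₁ := parallelPair (F.map f) (F.map g)) H
    (diagramIsoParallelPair (parallelPair f g ⋙ F)).symm

end CategoryTheory.Functor

namespace CategoryTheory.Comma

variable {A B T : Type*} [Category A] [Category B] [Category T] {L : A ⥤ T} {R : B ⥤ T}

instance reflectsIsomorphisms_fst_prod'_snd :
    ((fst L R).prod' (snd L R)).ReflectsIsomorphisms where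
  reflects f _ := by
    have : IsIso f.left :=
      inferInstanceAs (IsIso ((Prod.fst A B).map (((fst L R).prod' (snd L R)).map f)))
    have : IsIso f.right :=
      inferInstanceAs (IsIso ((Prod.snd A B).map (((fst L R).prod' (snd L R)).map f)))
    exact (isoMk (asIso f.left) (asIso f.right) f.w).isIso_hom

instance preservesLimit_fst_prod'_snd {J : Type*} [Category J] (F : J ⥤ Comma L R)
    [HasLimit (F ⋙ fst L R)] [HasLimit (F ⋙ snd L R)] [PreservesLimit (F ⋙ snd L R) R] :
    PreservesLimit F ((fst L R).prod' (snd L R)) :=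
  preservesLimit_of_preserves_limit_cone
    (coneOfPreservesIsLimit F (limit.isLimit _) (limit.isLimit _))
    (isLimitOfIsLimitMapConeFstSnd _ (limit.isLimit (F ⋙ fst L R)) (limit.isLimit (F ⋙ snd L R)))

instance preservesColimit_fst_prod'_snd {J : Type*} [Category J] (F : J ⥤ Comma L R)
    [HasColimit (F ⋙ fst L R)] [HasColimit (F ⋙ snd L R)] [PreservesColimit (F ⋙ fst L R) L] :
    PreservesColimit F ((fst L R).prod' (snd L R)) :=
  preservesColimit_of_preserves_colimit_cocone
    (coconeOfPreservesIsColimit F (colimit.isColimit _) (colimit.isColimit _))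
    (isColimitOfIsColimitMapCoconeFstSnd _ (colimit.isColimit (F ⋙ fst L R))
      (colimit.isColimit (F ⋙ snd L R)))

section SplitPairs

variable {X Y : Comma L R} (f g : X ⟶ Y)

instance isCosplitPair_fst [((fst L R).prod' (snd L R)).IsCosplitPair f g] :
    (fst L R).IsCosplitPair f g :=
  inferInstanceAs (HasSplitEqualizer ((Prod.fst A B).map (((fst L R).prod' (snd L R)).map f))
    ((Prod.fst A B).map (((fst L R).prod' (snd L R)).map g)))

instance isCosplitPair_snd [((fst L R).prod' (snd L R)).IsCosplitPair f g] :
    (snd L R).IsCosplitPair f g :=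
  inferInstanceAs (HasSplitEqualizer ((Prod.snd A B).map (((fst L R).prod' (snd L R)).map f))
    ((Prod.snd A B).map (((fst L R).prod' (snd L R)).map g)))

instance isSplitPair_fst [((fst L R).prod' (snd L R)).IsSplitPair f g] :
    (fst L R).IsSplitPair f g :=
  inferInstanceAs (HasSplitCoequalizer ((Prod.fst A B).map (((fst L R).prod' (snd L R)).map f))
    ((Prod.fst A B).map (((fst L R).prod' (snd L R)).map g)))

instance isSplitPair_snd [((fst L R).prod' (snd L R)).IsSplitPair f g] :
    (snd L R).IsSplitPair f g :=
  inferInstanceAs (HasSplitCoequalizer ((Prod.snd A B).map (((fst L R).prod' (snd L R)).map f))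
    ((Prod.snd A B).map (((fst L R).prod' (snd L R)).map g)))

end SplitPairs

instance hasEqualizerOfIsCosplitPair_fst_prod'_snd :
    Comonad.HasEqualizerOfIsCosplitPair ((fst L R).prod' (snd L R)) where
  out _ _ _ := inferInstance

instance preservesLimitOfIsCosplitPair_fst_prod'_snd :
    Comonad.PreservesLimitOfIsCosplitPair ((fst L R).prod' (snd L R)) where
  out _ _ _ := inferInstance

instance hasCoequalizerOfIsSplitPair_fst_prod'_snd :
    Monad.HasCoequalizerOfIsSplitPair ((fst L R).prod' (snd L R)) where
  out _ _ _ := inferInstance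

instance preservesColimitOfIsSplitPair_fst_prod'_snd :
    Monad.PreservesColimitOfIsSplitPair ((fst L R).prod' (snd L R)) where
  out _ _ _ := inferInstance

end CategoryTheory.Comma

section Scone

variable {C : Type u₁} [Category.{v₁} C] {D : Type u₂} [Category.{v₂} D] (G : C ⥤ D)

abbrev sconeForget : Comma (𝟭 D) G ⥤ D × C := (Comma.fst (𝟭 D) G).prod' (Comma.snd (𝟭 D) G)

section Cofree

variable [HasBinaryProducts D]

noncomputable abbrev sconeCofreeObj (P : D × C) : Comma (𝟭 D) G :=
  { left := P.1 ⨯ G.obj P.2, right := P.2, hom := prod.snd }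

noncomputable def sconeCofreeHomEquiv (X : Comma (𝟭 D) G) (P : D × C) :
    ((sconeForget G).obj X ⟶ P) ≃ (X ⟶ sconeCofreeObj G P) where
  toFun k := { left := prod.lift k.1 (X.hom ≫ G.map k.2), right := k.2, w := prod.lift_snd _ _ }
  invFun m := (m.left ≫ prod.fst, m.right)
  left_inv k := Prod.ext (prod.lift_fst _ _) rfl
  right_inv m := by
    ext
    · exact prod.lift_fst _ _
    · exact (prod.lift_snd _ _).trans m.w.symm
    · rfl

theorem sconeCofreeHomEquiv_naturality {X' X : Comma (𝟭 D) G} {P : D × C} (f : X' ⟶ X)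
    (k : (sconeForget G).obj X ⟶ P) :
    sconeCofreeHomEquiv G X' P ((sconeForget G).map f ≫ k) = f ≫ sconeCofreeHomEquiv G X P k := by
  ext
  · simp [sconeCofreeHomEquiv, prod.lift_fst]
  · simpa [sconeCofreeHomEquiv, prod.lift_snd] using (f.w_assoc _).symm
  · rfl

noncomputable def sconeCofree : D × C ⥤ Comma (𝟭 D) G :=
  Adjunction.rightAdjointOfEquiv (sconeCofreeHomEquiv G) fun _ _ _ =>
    sconeCofreeHomEquiv_naturality G

noncomputable def sconeForgetCofreeAdj : sconeForget G ⊣ sconeCofree G :=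
  Adjunction.adjunctionOfEquivRight _ _

end Cofree

section Free

variable [HasBinaryCoproducts C] {G} {F : D ⥤ C} (adj : F ⊣ G)

noncomputable abbrev sconeFreeObj (P : D × C) : Comma (𝟭 D) G :=
  { left := P.1, right := F.obj P.1 ⨿ P.2, hom := adj.unit.app P.1 ≫ G.map coprod.inl }

noncomputable def sconeFreeHomEquiv (P : D × C) (X : Comma (𝟭 D) G) :
    (sconeFreeObj adj P ⟶ X) ≃ (P ⟶ (sconeForget G).obj X) where
  toFun m := (m.left, coprod.inr ≫ m.right)
  invFun k :=
    { left := k.1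
      right := coprod.desc ((adj.homEquiv P.1 X.right).symm (k.1 ≫ X.hom)) k.2
      w := by
        simp only [Functor.id_map, Category.assoc, ← G.map_comp, coprod.inl_desc]
        exact ((adj.homEquiv _ _).apply_symm_apply _).symm.trans (adj.homEquiv_unit _ _ _) }
  left_inv m := by
    ext
    · rfl
    · rw [coprod.inl_desc, Equiv.symm_apply_eq, Adjunction.homEquiv_unit]
      simpa using m.w
    · exact coprod.inr_desc _ _
  right_inv k := Prod.ext rfl (coprod.inr_desc _ _)

theorem sconeFreeHomEquiv_naturality {P : D × C} {X X' : Comma (𝟭 D) G} (f : X ⟶ X')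
    (m : sconeFreeObj adj P ⟶ X) :
    sconeFreeHomEquiv adj P X' (m ≫ f) = sconeFreeHomEquiv adj P X m ≫ (sconeForget G).map f :=
  Prod.ext rfl (Category.assoc _ _ _).symm

noncomputable def sconeFree : D × C ⥤ Comma (𝟭 D) G :=
  Adjunction.leftAdjointOfEquiv (sconeFreeHomEquiv adj) fun _ _ _ =>
    sconeFreeHomEquiv_naturality adj

noncomputable def sconeFreeForgetAdj : sconeFree adj ⊣ sconeForget G :=
  Adjunction.adjunctionOfEquivLeft _ _

end Free

end Scone

theorem scone_forgetful_functor_comonadic_and_monadic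
    {C : Type u₁} [Category.{v₁} C] {D : Type u₂} [Category.{v₂} D]
    (G : C ⥤ D) [HasBinaryCoproducts C] [HasBinaryProducts D] [G.IsRightAdjoint] :
    Nonempty (ComonadicLeftAdjoint ((Comma.fst (𝟭 D) G).prod' (Comma.snd (𝟭 D) G))) ∧
    Nonempty (MonadicRightAdjoint ((Comma.fst (𝟭 D) G).prod' (Comma.snd (𝟭 D) G))) :=
  ⟨⟨Comonad.comonadicOfHasPreservesFSplitEqualizersOfReflectsIsomorphisms
      (sconeForgetCofreeAdj G)⟩,
    ⟨Monad.monadicOfHasPreservesGSplitCoequalizersOfReflectsIsomorphisms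
      (sconeFreeForgetAdj (Adjunction.ofIsRightAdjoint G))⟩⟩
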